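/- arXiv:2111.04136 — 5 statements merged into one kernel-verified Lean document; each statement's English description precedes it below -/
import Mathlib

section
/- Fix a prime power p^v with v ≥ 1, a positive integer d, and define the multiplicative function φ_d(e) = φ(d)·e/φ(d·e) where φ is Euler's totient function. Then the Dirichlet convolution (φ_d * μ)(p^v) equals 1/(p-1) if v = 1 and p does not divide d, and equals 0 otherwise. -/
/-!
Convolving with `μ` at a prime power only sees the last two divisors:
`(f * μ)(p^(k+1)) = f(p^(k+1)) - f(p^k)`. For `f = φ_d` (here `totientRatio d`), if `p ∣ d` then
`φ(d p^k) = p^k φ(d)`, so `φ_d(p^k)` does not depend on `k` and the difference vanishes; if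
`p ∤ d` then `φ_d(p^k) = p/(p-1)` for every `k ≥ 1`, so only `v = 1` survives, with value
`p/(p-1) - φ_d(1) = 1/(p-1)`.
-/

open ArithmeticFunction
open scoped ArithmeticFunction.Moebius

theorem Nat.sum_divisorsAntidiagonal_mul_moebius_prime_pow {R : Type*} [CommRing R]
    (f : ℕ → R) {p : ℕ} (hp : p.Prime) (k : ℕ) :
    ∑ x ∈ (p ^ (k + 1)).divisorsAntidiagonal, f x.1 * μ x.2 = f (p ^ (k + 1)) - f (p ^ k) := by
  have hμ : ∀ i, (μ (p ^ (i + 2)) : R) = 0 := fun i => by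
    rw [moebius_apply_prime_pow hp (by omega), if_neg (by omega), Int.cast_zero]
  have hdiv : p ^ (k + 1) / p = p ^ k := by rw [pow_succ', Nat.mul_div_cancel_left _ hp.pos]
  rw [Nat.sum_divisorsAntidiagonal' (fun a b => f a * μ b), Nat.sum_divisors_prime_pow hp,
    Finset.sum_range_succ', Finset.sum_range_succ']
  simp only [hμ, mul_zero, Finset.sum_const_zero, zero_add, pow_zero, Nat.div_one,
    moebius_apply_one, pow_one, moebius_apply_prime hp, hdiv]
  push_cast
  ring

theorem Nat.totient_mul_pow_of_prime_of_dvd {p d : ℕ} (hp : p.Prime) (hpd : p ∣ d) (k : ℕ) :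
    (d * p ^ k).totient = p ^ k * d.totient := by
  induction k with
  | zero => simp
  | succ k ih =>
    rw [pow_succ', ← mul_assoc, mul_comm d, mul_assoc,
      Nat.totient_mul_of_prime_of_dvd hp (hpd.mul_right _), ih, mul_assoc]

def totientRatio (d e : ℕ) : ℚ := d.totient * e / (d * e).totient

theorem totientRatio_one {d : ℕ} (hd : d ≠ 0) : totientRatio d 1 = 1 := by
  simp [totientRatio, hd]

theorem totientRatio_prime_pow_of_dvd {p d : ℕ} (hp : p.Prime) (hpd : p ∣ d) (k : ℕ) :
    totientRatio d (p ^ k) = totientRatio d 1 := by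
  have hpk : ((p ^ k : ℕ) : ℚ) ≠ 0 := by exact_mod_cast (pow_pos hp.pos k).ne'
  rw [totientRatio, totientRatio, Nat.totient_mul_pow_of_prime_of_dvd hp hpd, mul_one,
    Nat.cast_one, mul_one, Nat.cast_mul, mul_comm ((p ^ k : ℕ) : ℚ), mul_div_mul_right _ _ hpk]

theorem totientRatio_prime_pow_of_not_dvd {p d : ℕ} (hp : p.Prime) (hpd : ¬p ∣ d) {k : ℕ}
    (hk : k ≠ 0) : totientRatio d (p ^ k) = p / (p - 1) := by
  have hd : (d.totient : ℚ) ≠ 0 := by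
    simpa using fun h : d = 0 => hpd (h ▸ dvd_zero p)
  have hp0 : (p : ℚ) ≠ 0 := by exact_mod_cast hp.ne_zero
  have hp1 : (p : ℚ) - 1 ≠ 0 := sub_ne_zero.mpr (by exact_mod_cast hp.one_lt.ne')
  obtain ⟨j, rfl⟩ : ∃ j, k = j + 1 := Nat.exists_eq_add_one.mpr (Nat.pos_of_ne_zero hk)
  rw [totientRatio, Nat.totient_mul ((hp.coprime_iff_not_dvd.mpr hpd).symm.pow_right _),
    Nat.totient_prime_pow_succ hp]
  push_cast [Nat.cast_sub hp.one_le, pow_succ]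
  field_simp

theorem stmt_1_general (p : ℕ) (hp : p.Prime) (v : ℕ) (hv : 1 ≤ v) (d : ℕ) :
    (∑ x ∈ Nat.divisorsAntidiagonal (p ^ v),
        ((Nat.totient d : ℚ) * x.1 / (Nat.totient (d * x.1) : ℚ)) * (μ x.2 : ℚ)) =
      if v = 1 ∧ ¬ p ∣ d then 1 / ((p : ℚ) - 1) else 0 := by
  obtain ⟨w, rfl⟩ : ∃ w, v = w + 1 := Nat.exists_eq_add_one.mpr hv
  change ∑ x ∈ (p ^ (w + 1)).divisorsAntidiagonal, totientRatio d x.1 * μ x.2 = _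
  rw [Nat.sum_divisorsAntidiagonal_mul_moebius_prime_pow _ hp]
  by_cases hpd : p ∣ d
  · rw [totientRatio_prime_pow_of_dvd hp hpd, totientRatio_prime_pow_of_dvd hp hpd, sub_self,
      if_neg fun h => h.2 hpd]
  rw [totientRatio_prime_pow_of_not_dvd hp hpd w.succ_ne_zero]
  rcases eq_or_ne w 0 with rfl | hw
  · have hp1 : (p : ℚ) - 1 ≠ 0 := sub_ne_zero.mpr (by exact_mod_cast hp.one_lt.ne')
    rw [pow_zero, totientRatio_one (by rintro rfl; exact hpd (dvd_zero p)), if_pos ⟨rfl, hpd⟩]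
    field_simp
    ring
  · rw [totientRatio_prime_pow_of_not_dvd hp hpd hw, sub_self, if_neg fun h => hw (by omega)]

/-- For a prime power `p^v` (`v ≥ 1`) and a positive integer `d`, the Dirichlet
convolution of `φ_d(e) = φ(d)·e/φ(d·e)` with the Möbius function, evaluated at
`p^v`, equals `1/(p-1)` if `v = 1` and `p ∤ d`, and `0` otherwise. -/
theorem stmt_1 (p : ℕ) (hp : p.Prime) (v : ℕ) (hv : 1 ≤ v) (d : ℕ) (hd : 0 < d) :
    (∑ x ∈ Nat.divisorsAntidiagonal (p ^ v),
        ((Nat.totient d : ℚ) * x.1 / (Nat.totient (d * x.1) : ℚ)) * (μ x.2 : ℚ)) =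
      if v = 1 ∧ ¬ p ∣ d then 1 / ((p : ℚ) - 1) else 0 :=
  stmt_1_general p hp v hv d
end

section
/- Let d and 𝔨 be positive integers. If gcd(d, 𝔨) = 1, then (d/φ(d))·Σ_{ek=𝔨} φ(d)eμ(k)/φ(de) = d·μ²(𝔨)/φ(d𝔨), and if gcd(d, 𝔨) > 1, then the sum Σ_{ek=𝔨} φ(d)eμ(k)/φ(de) vanishes. -/
open ArithmeticFunction Finset
open scoped ArithmeticFunction.Moebius

namespace Stmt2Aux

/-- `G d e = φ(d)·e / φ(d·e)` as an arithmetic function of `e`. -/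
noncomputable def G (d : ℕ) : ArithmeticFunction ℚ :=
  ⟨fun e => ((Nat.totient d : ℚ) * e) / (Nat.totient (d * e) : ℚ), by simp⟩

lemma G_apply (d e : ℕ) : G d e = ((Nat.totient d : ℚ) * e) / (Nat.totient (d * e) : ℚ) := rfl

lemma totQ_ne_zero {d : ℕ} (hd : d ≠ 0) : (Nat.totient d : ℚ) ≠ 0 := by
  exact_mod_cast (Nat.totient_pos.mpr (Nat.pos_of_ne_zero hd)).ne'

lemma tot_formula (d e : ℕ) (hd : d ≠ 0) (he : e ≠ 0) :
    ((Nat.totient (d * e) : ℚ)) =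
      (Nat.totient d : ℚ) * e * ∏ p ∈ e.primeFactors \ d.primeFactors, (1 - (p : ℚ)⁻¹) := by
  rw [Nat.totient_eq_mul_prod_factors (d * e), Nat.totient_eq_mul_prod_factors d,
    Nat.primeFactors_mul hd he, ← Finset.union_sdiff_self_eq_union,
    Finset.prod_union Finset.disjoint_sdiff]
  push_cast
  ring

lemma one_sub_inv_ne_zero {p : ℕ} (hp : p.Prime) : (1 : ℚ) - (p : ℚ)⁻¹ ≠ 0 := by
  have h2 : (2 : ℚ) ≤ (p : ℚ) := by exact_mod_cast hp.two_le
  have h0 : (0 : ℚ) < (p : ℚ) := by linarith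
  intro h
  have h1 : (p : ℚ)⁻¹ = 1 := by linarith
  have : (p : ℚ) = 1 := by
    field_simp at h1
    linarith [h1]
  linarith

lemma prod_ne_zero {s : Finset ℕ} (hs : ∀ p ∈ s, p.Prime) :
    ∏ p ∈ s, ((1 : ℚ) - (p : ℚ)⁻¹) ≠ 0 :=
  Finset.prod_ne_zero_iff.mpr fun p hp => one_sub_inv_ne_zero (hs p hp)

lemma prod_diff_ne_zero (d e : ℕ) :
    ∏ p ∈ e.primeFactors \ d.primeFactors, ((1 : ℚ) - (p : ℚ)⁻¹) ≠ 0 :=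
  prod_ne_zero fun p hp => Nat.prime_of_mem_primeFactors (Finset.mem_sdiff.mp hp).1

lemma G_eq (d e : ℕ) (hd : d ≠ 0) (he : e ≠ 0) :
    G d e = (∏ p ∈ e.primeFactors \ d.primeFactors, ((1 : ℚ) - (p : ℚ)⁻¹))⁻¹ := by
  have he' : (e : ℚ) ≠ 0 := by exact_mod_cast he
  have := totQ_ne_zero hd
  rw [G_apply, tot_formula d e hd he, div_mul_eq_div_div,
    div_self (mul_ne_zero this he'), one_div]

lemma sdiff_union (d m n : ℕ) (hm : m ≠ 0) (hn : n ≠ 0) :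
    (m * n).primeFactors \ d.primeFactors =
      (m.primeFactors \ d.primeFactors) ∪ (n.primeFactors \ d.primeFactors) := by
  rw [Nat.primeFactors_mul hm hn, Finset.union_sdiff_distrib]

lemma sdiff_disjoint' (d m n : ℕ) (hmn : Nat.Coprime m n) :
    Disjoint (m.primeFactors \ d.primeFactors) (n.primeFactors \ d.primeFactors) :=
  hmn.disjoint_primeFactors.mono Finset.sdiff_subset Finset.sdiff_subset

lemma G_mult (d : ℕ) (hd : d ≠ 0) : (G d).IsMultiplicative := by
  constructor
  · rw [G_apply]; simp [div_self (totQ_ne_zero hd)]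
  · intro m n hmn
    rcases eq_or_ne m 0 with rfl | hm
    · simp [G_apply]
    rcases eq_or_ne n 0 with rfl | hn
    · simp [G_apply]
    rw [G_eq d m hd hm, G_eq d n hd hn, G_eq d (m * n) hd (by positivity),
      sdiff_union d m n hm hn, Finset.prod_union (sdiff_disjoint' d m n hmn), mul_inv]

/-- `H d k = φ(d)·μ(k)²/φ(d·k)` if `gcd d k = 1`, else `0`. -/
noncomputable def H (d : ℕ) : ArithmeticFunction ℚ :=
  ⟨fun k => if Nat.gcd d k = 1 then
      (Nat.totient d : ℚ) * (μ k : ℚ) ^ 2 / (Nat.totient (d * k) : ℚ) else 0, by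
    split <;> simp⟩

lemma H_apply (d k : ℕ) : H d k = (if Nat.gcd d k = 1 then
    (Nat.totient d : ℚ) * (μ k : ℚ) ^ 2 / (Nat.totient (d * k) : ℚ) else 0) := rfl

lemma H_one (d : ℕ) (hd : d ≠ 0) : H d 1 = 1 := by
  rw [H_apply]; simp [div_self (totQ_ne_zero hd)]

lemma H_mult (d : ℕ) (hd : d ≠ 0) : (H d).IsMultiplicative := by
  constructor
  · exact H_one d hd
  · intro m n hmn
    rcases eq_or_ne m 0 with rfl | hm
    · rw [Nat.coprime_zero_left] at hmn
      subst hmn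
      simp [H_one d hd]
    rcases eq_or_ne n 0 with rfl | hn
    · rw [Nat.coprime_zero_right] at hmn
      subst hmn
      simp [H_one d hd]
    by_cases h1 : Nat.gcd d m = 1
    · by_cases h2 : Nat.gcd d n = 1
      · have h12 : Nat.gcd d (m * n) = 1 := Nat.Coprime.mul_right h1 h2
        rw [H_apply, H_apply, H_apply, if_pos h1, if_pos h2, if_pos h12]
        have hμz : μ (m * n) = μ m * μ n :=
          isMultiplicative_moebius.map_mul_of_coprime hmn
        have hμ : ((μ (m * n) : ℤ) : ℚ) = ((μ m : ℤ) : ℚ) * ((μ n : ℤ) : ℚ) := by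
          exact_mod_cast hμz
        rw [hμ, tot_formula d m hd hm, tot_formula d n hd hn,
          tot_formula d (m * n) hd (by positivity),
          sdiff_union d m n hm hn, Finset.prod_union (sdiff_disjoint' d m n hmn)]
        have hm' : (m : ℚ) ≠ 0 := by exact_mod_cast hm
        have hn' : (n : ℚ) ≠ 0 := by exact_mod_cast hn
        have hPm := prod_diff_ne_zero d m
        have hPn := prod_diff_ne_zero d n
        have hφ := totQ_ne_zero hd
        rw [div_mul_div_comm, div_eq_div_iff (by positivity) (by positivity)]
        push_cast
        ring
      · have h12 : Nat.gcd d (m * n) ≠ 1 := by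
          intro h
          exact h2 (Nat.Coprime.coprime_dvd_right (dvd_mul_left n m) h)
        rw [H_apply d (m * n), H_apply d n, if_neg h2, if_neg h12, mul_zero]
    · have h12 : Nat.gcd d (m * n) ≠ 1 := by
        intro h
        exact h1 (Nat.Coprime.coprime_dvd_right (dvd_mul_right m n) h)
      rw [H_apply d (m * n), H_apply d m, if_neg h1, if_neg h12, zero_mul]

lemma G_pp (d p : ℕ) (hd : d ≠ 0) (hp : p.Prime) {j : ℕ} (hj : j ≠ 0) :
    G d (p ^ j) = if p ∣ d then 1 else ((1 : ℚ) - (p : ℚ)⁻¹)⁻¹ := by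
  rw [G_eq d (p ^ j) hd (pow_ne_zero j hp.pos.ne'),
    Nat.primeFactors_prime_pow hj hp]
  by_cases hpd : p ∣ d
  · have hmem : p ∈ d.primeFactors := Nat.mem_primeFactors.mpr ⟨hp, hpd, hd⟩
    rw [if_pos hpd, show ({p} : Finset ℕ) \ d.primeFactors = ∅ from
      Finset.sdiff_eq_empty_iff_subset.mpr (Finset.singleton_subset_iff.mpr hmem)]
    simp
  · have hmem : p ∉ d.primeFactors := fun h => hpd (Nat.dvd_of_mem_primeFactors h)
    rw [if_neg hpd, show ({p} : Finset ℕ) \ d.primeFactors = {p} from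
      Finset.sdiff_eq_self_iff_disjoint.mpr (by simpa using hmem)]
    simp

lemma key_pp (d p : ℕ) (hd : d ≠ 0) (hp : p.Prime) (i : ℕ) :
    (G d * (μ : ArithmeticFunction ℚ)) (p ^ i) = H d (p ^ i) := by
  rcases i with _ | m
  · rw [pow_zero, ((G_mult d hd).mul (isMultiplicative_moebius.intCast)).map_one, H_one d hd]
  have hdiv : ∀ j, j ≤ m + 1 → p ^ (m + 1) / p ^ j = p ^ (m + 1 - j) :=
    fun j hj => Nat.pow_div hj hp.pos
  rw [mul_apply, Nat.sum_divisorsAntidiagonal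
      (fun a b => G d a * ((μ : ArithmeticFunction ℚ)) b),
    Nat.sum_divisors_prime_pow hp, Finset.sum_range_succ, Finset.sum_range_succ]
  have h0 : ∑ j ∈ Finset.range m,
      G d (p ^ j) * ((μ : ArithmeticFunction ℚ)) (p ^ (m + 1) / p ^ j) = 0 := by
    apply Finset.sum_eq_zero
    intro j hj
    have hjm : j < m := Finset.mem_range.mp hj
    rw [hdiv j (by omega), intCoe_apply,
      moebius_apply_prime_pow hp (by omega : m + 1 - j ≠ 0), if_neg (by omega)]
    simp
  have e1 : m + 1 - m = 1 := by omega
  have e2 : m + 1 - (m + 1) = 0 := by omega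
  rw [h0, hdiv m (by omega), hdiv (m + 1) (by omega), e1, e2, pow_one, pow_zero,
    intCoe_apply, intCoe_apply, moebius_apply_prime hp, moebius_apply_one]
  push_cast
  rcases m with _ | l
  · -- the case i = 1
    rw [pow_zero, (G_mult d hd).1, zero_add]
    by_cases hpd : p ∣ d
    · have hgcd : Nat.gcd d (p ^ (0 + 1)) ≠ 1 := by
        intro h
        have hpg : p ∣ Nat.gcd d (p ^ (0 + 1)) :=
          Nat.dvd_gcd hpd (dvd_pow_self p (by omega))
        rw [h] at hpg
        exact hp.one_lt.ne' (Nat.eq_one_of_dvd_one hpg)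
      rw [G_pp d p hd hp (by omega : (0:ℕ) + 1 ≠ 0), if_pos hpd, H_apply, if_neg hgcd]
      ring
    · have hcop : Nat.gcd d (p ^ (0 + 1)) = 1 :=
        (Nat.Coprime.pow_right _ (Nat.coprime_comm.mp (hp.coprime_iff_not_dvd.mpr hpd)))
      rw [G_pp d p hd hp (by omega : (0:ℕ) + 1 ≠ 0), if_neg hpd, H_apply, if_pos hcop]
      have hPF : (p ^ (0 + 1)).primeFactors \ d.primeFactors = {p} := by
        rw [Nat.primeFactors_prime_pow (by omega) hp]
        refine Finset.sdiff_eq_self_iff_disjoint.mpr ?_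
        simpa using fun h => hpd (Nat.dvd_of_mem_primeFactors h)
      rw [tot_formula d (p ^ (0 + 1)) hd (pow_ne_zero _ hp.pos.ne'), hPF,
        Finset.prod_singleton, pow_one]
      have hμp : ((μ p : ℤ) : ℚ) = -1 := by
        rw [moebius_apply_prime hp]; norm_num
      rw [hμp]
      have hP := one_sub_inv_ne_zero hp
      have hp0 : (p : ℚ) ≠ 0 := by exact_mod_cast hp.pos.ne'
      have hφ := totQ_ne_zero hd
      have hp2 : (2 : ℚ) ≤ (p : ℚ) := by exact_mod_cast hp.two_le
      have hp1 : (-1 : ℚ) + (p : ℚ) ≠ 0 := by intro h; linarith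
      have h3 : (1 : ℚ) - (p : ℚ)⁻¹ = (-1 + p) / p := by field_simp; ring
      rw [h3]
      field_simp
      ring
  · -- the case i ≥ 2
    have hGG : G d (p ^ (l + 1)) = G d (p ^ (l + 1 + 1)) := by
      rw [G_pp d p hd hp (by omega : l + 1 ≠ 0), G_pp d p hd hp (by omega : l + 1 + 1 ≠ 0)]
    rw [H_apply]
    split_ifs with h
    · have hμ0 : μ (p ^ (l + 1 + 1)) = 0 := by
        rw [moebius_apply_prime_pow hp (by omega), if_neg (by omega)]
      rw [hμ0, ← hGG]
      push_cast
      ring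
    · rw [← hGG]; ring

end Stmt2Aux

open Stmt2Aux in
/-- For positive integers `d` and `𝔨`, the quantity
`C(d,𝔨) = (d/φ(d)) · Σ_{e·k = 𝔨} φ(d)·e·μ(k)/φ(d·e)` equals
`d·μ²(𝔨)/φ(d·𝔨)` when `gcd(d,𝔨) = 1`, and `0` otherwise. -/
theorem stmt_2 (d k : ℕ) (hd : 0 < d) (hk : 0 < k) :
    ((d : ℚ) / (Nat.totient d : ℚ)) *
        (∑ x ∈ Nat.divisorsAntidiagonal k,
          ((Nat.totient d : ℚ) * x.1 * (μ x.2 : ℚ)) / (Nat.totient (d * x.1) : ℚ)) =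
      if Nat.gcd d k = 1 then (d : ℚ) * ((μ k : ℚ)) ^ 2 / (Nat.totient (d * k) : ℚ)
      else 0 := by
  have hd0 : d ≠ 0 := hd.ne'
  have hF : (G d * (μ : ArithmeticFunction ℚ)) = H d :=
    (ArithmeticFunction.IsMultiplicative.eq_iff_eq_on_prime_powers _
      ((G_mult d hd0).mul (isMultiplicative_moebius.intCast)) _ (H_mult d hd0)).mpr
      (fun p i hp => key_pp d p hd0 hp i)
  have hsum : (∑ x ∈ Nat.divisorsAntidiagonal k,
      ((Nat.totient d : ℚ) * x.1 * (μ x.2 : ℚ)) / (Nat.totient (d * x.1) : ℚ)) =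
      (G d * (μ : ArithmeticFunction ℚ)) k := by
    rw [ArithmeticFunction.mul_apply]
    refine Finset.sum_congr rfl fun x hx => ?_
    rw [G_apply, ArithmeticFunction.intCoe_apply, div_mul_eq_mul_div]
  rw [hsum, hF, H_apply]
  split_ifs with h
  · have hφ := totQ_ne_zero hd0
    have hφdk : (Nat.totient (d * k) : ℚ) ≠ 0 := totQ_ne_zero (by positivity)
    field_simp
  · exact mul_zero _
end

section
/- Let w, z ∈ ℤ² with w₁z₁ + w₂z₂ = q and fix z and q with q ≠ 0. Then the number of w ∈ ℤ² with ‖w‖₂ ≤ √M and w₁z₁ + w₂z₂ = q, where ‖z‖₂ ≥ √N, is O(1 + √(M/N)). -/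
lemma aux_solve (z₁ z₂ d₁ d₂ : ℤ) (hg : Int.gcd z₁ z₂ = 1)
    (h : d₁ * z₁ + d₂ * z₂ = 0) : ∃ t : ℤ, d₁ = -t * z₂ ∧ d₂ = t * z₁ := by
  rcases eq_or_ne z₁ 0 with hz | hz
  · subst hz
    have hz2 : z₂ = 1 ∨ z₂ = -1 := by
      have := Int.natAbs_eq_iff.mp (show z₂.natAbs = 1 by simpa [Int.gcd] using hg)
      simpa using this
    have hd2 : d₂ = 0 := by
      rcases hz2 with h2 | h2 <;> subst h2 <;> omega
    refine ⟨-d₁ * z₂, ?_, by simp [hd2]⟩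
    rcases hz2 with h2 | h2 <;> subst h2 <;> ring
  · have hco : IsCoprime z₁ z₂ := Int.isCoprime_iff_gcd_eq_one.mpr hg
    have hdvd : z₁ ∣ d₂ * z₂ := ⟨-d₁, by linarith⟩
    have hdvd2 : z₁ ∣ d₂ := hco.dvd_of_dvd_mul_right hdvd
    obtain ⟨t, ht⟩ := hdvd2
    refine ⟨t, ?_, by rw [ht]; ring⟩
    have h2 : z₁ * (d₁ + t * z₂) = 0 := by rw [ht] at h; ring_nf; linarith
    have : d₁ + t * z₂ = 0 := by
      rcases mul_eq_zero.mp h2 with h3 | h3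
      · exact absurd h3 hz
      · exact h3
    linarith

/-- There is an absolute constant `C` such that for all real `M, N > 0`, any
primitive vector `z = (z₁,z₂) ∈ ℤ²` with `‖z‖₂² ≥ N`, and any nonzero integer
`q`, the number of `w ∈ ℤ²` with `‖w‖₂ ≤ √M` and `w₁z₁ + w₂z₂ = q` is at most
`C·(1 + √(M/N))`. -/
theorem stmt_7 :
    ∃ C : ℝ, 0 < C ∧ ∀ (M N : ℝ) (z₁ z₂ q : ℤ), 0 < M → 0 < N →
      Int.gcd z₁ z₂ = 1 → q ≠ 0 → N ≤ (z₁ : ℝ) ^ 2 + (z₂ : ℝ) ^ 2 →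
      (({w : ℤ × ℤ | (w.1 : ℝ) ^ 2 + (w.2 : ℝ) ^ 2 ≤ M ∧
          w.1 * z₁ + w.2 * z₂ = q}.ncard : ℝ)) ≤ C * (1 + Real.sqrt (M / N)) := by
  refine ⟨4, by norm_num, ?_⟩
  intro M N z₁ z₂ q hM hN hg hq hNz
  set S : Set (ℤ × ℤ) := {w : ℤ × ℤ | (w.1 : ℝ) ^ 2 + (w.2 : ℝ) ^ 2 ≤ M ∧
      w.1 * z₁ + w.2 * z₂ = q} with hS
  set s : ℝ := Real.sqrt (M / N) with hs
  have hs0 : 0 ≤ s := Real.sqrt_nonneg _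
  rcases Set.eq_empty_or_nonempty S with hE | ⟨w₀, hw₀⟩
  · rw [hE]
    simp only [Set.ncard_empty, Nat.cast_zero]
    nlinarith
  · set k : ℤ := ⌊2 * s⌋ with hk
    have hk0 : 0 ≤ k := Int.le_floor.mpr (by simpa using by positivity)
    -- S ⊆ image of Icc
    have hsub : S ⊆ (fun t : ℤ => (w₀.1 - t * z₂, w₀.2 + t * z₁)) '' Set.Icc (-k) k := by
      intro w hw
      have hd : (w.1 - w₀.1) * z₁ + (w.2 - w₀.2) * z₂ = 0 := by
        linear_combination hw.2 - hw₀.2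
      obtain ⟨t, ht1, ht2⟩ := aux_solve z₁ z₂ _ _ hg hd
      have hw1 : w.1 = w₀.1 - t * z₂ := by linarith
      have hw2 : w.2 = w₀.2 + t * z₁ := by linarith
      refine ⟨t, ?_, by rw [Prod.ext_iff]; exact ⟨hw1.symm, hw2.symm⟩⟩
      -- bound |t|
      have hsum : ((w.1 - w₀.1 : ℤ) : ℝ) ^ 2 + ((w.2 - w₀.2 : ℤ) : ℝ) ^ 2 ≤ 4 * M := by
        push_cast
        nlinarith [hw.1, hw₀.1, sq_nonneg ((w.1 : ℝ) + w₀.1), sq_nonneg ((w.2 : ℝ) + w₀.2)]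
      have hsum2 : (t : ℝ) ^ 2 * N ≤ 4 * M := by
        have : ((w.1 - w₀.1 : ℤ) : ℝ) ^ 2 + ((w.2 - w₀.2 : ℤ) : ℝ) ^ 2
            = (t : ℝ) ^ 2 * ((z₁ : ℝ) ^ 2 + (z₂ : ℝ) ^ 2) := by
          rw [hw1, hw2] at *
          push_cast
          ring
        nlinarith [sq_nonneg (t : ℝ)]
      have ht2 : (t : ℝ) ^ 2 ≤ (2 * s) ^ 2 := by
        have : s ^ 2 = M / N := Real.sq_sqrt (by positivity)
        rw [mul_pow, this]
        rw [div_eq_mul_inv]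
        have := hsum2
        calc (t:ℝ)^2 = (t:ℝ)^2 * N * N⁻¹ := by field_simp
          _ ≤ 4 * M * N⁻¹ := by
              apply mul_le_mul_of_nonneg_right hsum2 (by positivity)
          _ = 2 ^ 2 * (M * N⁻¹) := by ring
      have habs : |(t : ℝ)| ≤ 2 * s := by
        rw [abs_le]
        constructor <;> nlinarith [ht2, hs0, sq_nonneg ((t:ℝ) + 2 * s), sq_nonneg ((t:ℝ) - 2 * s)]
      rw [abs_le] at habs
      constructor
      · have hneg : -t ≤ k := Int.le_floor.mpr (by push_cast; linarith [habs.1])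
        omega
      · exact Int.le_floor.mpr (by exact_mod_cast habs.2)
    have hfin : (Set.Icc (-k) k).Finite := Set.finite_Icc _ _
    have h1 : S.ncard ≤ ((fun t : ℤ => (w₀.1 - t * z₂, w₀.2 + t * z₁)) '' Set.Icc (-k) k).ncard :=
      Set.ncard_le_ncard hsub (hfin.image _)
    have h2 : ((fun t : ℤ => (w₀.1 - t * z₂, w₀.2 + t * z₁)) '' Set.Icc (-k) k).ncard
        ≤ (Set.Icc (-k) k).ncard := Set.ncard_image_le hfin
    have h3 : (Set.Icc (-k) k).ncard = (2 * k + 1).toNat := by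
      rw [← Finset.coe_Icc, Set.ncard_coe_finset, Int.card_Icc]
      congr 1
      omega
    have hcard : (S.ncard : ℝ) ≤ 2 * (k : ℝ) + 1 := by
      have h4 := h1.trans h2
      rw [h3] at h4
      have h5 : (S.ncard : ℤ) ≤ 2 * k + 1 := by omega
      exact_mod_cast h5
    have hkle : (k : ℝ) ≤ 2 * s := Int.floor_le _
    nlinarith
end

section
/- Let a, b be odd coprime integers (possibly negative). With the extended Jacobi symbol defined by (a/b) := (a/|b|)·(a,b)_∞, where (a,b)_∞ = −1 if both a < 0 and b < 0, and 1 otherwise, we have the reciprocity law (a/|b|)·(b/|a|) = (−1)^{((a−1)/2)·((b−1)/2)}·(a,b)_∞. -/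
/-- Quadratic reciprocity for the Jacobi symbol extended to (possibly negative)
odd coprime integers: `(a/|b|)·(b/|a|) = (−1)^{((a−1)/2)·((b−1)/2)}·(a,b)_∞`,
where `(a,b)_∞ = −1` if both `a, b < 0` and `1` otherwise. -/
theorem stmt_8 (a b : ℤ) (ha : Odd a) (hb : Odd b) (hab : IsCoprime a b) :
    jacobiSym a b.natAbs * jacobiSym b a.natAbs =
      ((Int.negOnePow ((a - 1) / 2 * ((b - 1) / 2))) : ℤ) *
        (if a < 0 ∧ b < 0 then -1 else 1) := by
  set m := a.natAbs with hm
  set n := b.natAbs with hn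
  have hmo : Odd m := Int.natAbs_odd.mpr ha
  have hno : Odd n := Int.natAbs_odd.mpr hb
  obtain ⟨k, hk⟩ := id hmo
  obtain ⟨l, hl⟩ := id hno
  have hm2 : m / 2 = k := by omega
  have hn2 : n / 2 = l := by omega
  have hgcd : ((n : ℤ)).gcd m = 1 := by
    have := Int.isCoprime_iff_gcd_eq_one.mp hab
    simpa [Int.gcd, Nat.coprime_comm] using (Nat.coprime_comm.mp this)
  have key : jacobiSym (m : ℤ) n * jacobiSym (n : ℤ) m = (-1) ^ (k * l) := by
    rw [jacobiSym.quadratic_reciprocity hmo hno, hm2, hn2, mul_assoc, ← sq,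
      jacobiSym.sq_one hgcd, mul_one]
  have hχm : (ZMod.χ₄ (m : ZMod 4) : ℤ) = (-1) ^ k := by
    rw [show ((m : ZMod 4)) = ((m : ℕ) : ZMod 4) by push_cast; ring,
      ZMod.χ₄_eq_neg_one_pow (Nat.odd_iff.mp hmo), hm2]
  have hχn : (ZMod.χ₄ (n : ZMod 4) : ℤ) = (-1) ^ l := by
    rw [show ((n : ZMod 4)) = ((n : ℕ) : ZMod 4) by push_cast; ring,
      ZMod.χ₄_eq_neg_one_pow (Nat.odd_iff.mp hno), hn2]
  rcases Int.natAbs_eq a with hae | hae <;> rcases Int.natAbs_eq b with hbe | hbe <;>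
    rw [← hm] at hae <;> rw [← hn] at hbe
  · -- a = m, b = n
    have ha' : ¬ (a < 0 ∧ b < 0) := by intro h; omega
    rw [if_neg ha', mul_one]
    have e1 : (a - 1) / 2 = (k : ℤ) := by omega
    have e2 : (b - 1) / 2 = (l : ℤ) := by omega
    rw [e1, e2, hae, hbe, key, show ((k : ℤ) * l) = ((k * l : ℕ) : ℤ) by push_cast; ring,
      Int.coe_negOnePow_natCast]
  · -- a = m, b = -n
    have ha' : ¬ (a < 0 ∧ b < 0) := by intro h; omega
    rw [if_neg ha', mul_one]
    have e1 : (a - 1) / 2 = (k : ℤ) := by omega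
    have e2 : (b - 1) / 2 = -((l : ℤ) + 1) := by omega
    rw [e1, e2, hae, hbe, jacobiSym.neg _ hmo,
      show ((k : ℤ) * -((l : ℤ) + 1)) = -((k * (l+1) : ℕ) : ℤ) by push_cast; ring,
      Int.negOnePow_neg, Int.coe_negOnePow_natCast, hχm,
      show k * (l + 1) = k * l + k by ring, pow_add, ← key]
    ring
  · -- a = -m, b = n
    have ha' : ¬ (a < 0 ∧ b < 0) := by intro h; omega
    rw [if_neg ha', mul_one]
    have e1 : (a - 1) / 2 = -((k : ℤ) + 1) := by omega
    have e2 : (b - 1) / 2 = (l : ℤ) := by omega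
    rw [e1, e2, hae, hbe, jacobiSym.neg _ hno,
      show (-((k : ℤ) + 1) * l) = -(((k+1) * l : ℕ) : ℤ) by push_cast; ring,
      Int.negOnePow_neg, Int.coe_negOnePow_natCast, hχn,
      show (k + 1) * l = k * l + l by ring, pow_add, ← key]
    ring
  · -- a = -m, b = -n
    have ha' : a < 0 ∧ b < 0 := by constructor <;> omega
    rw [if_pos ha']
    have e1 : (a - 1) / 2 = -((k : ℤ) + 1) := by omega
    have e2 : (b - 1) / 2 = -((l : ℤ) + 1) := by omega
    rw [e1, e2, hae, hbe, jacobiSym.neg _ hno, jacobiSym.neg _ hmo,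
      show (-((k : ℤ) + 1) * -((l : ℤ) + 1)) = (((k+1) * (l+1) : ℕ) : ℤ) by push_cast; ring,
      Int.coe_negOnePow_natCast, hχm, hχn,
      show (k + 1) * (l + 1) = k * l + k + l + 1 by ring, pow_add, pow_add, pow_add, ← key]
    ring
end

section
/- Let g : ℤ² → ℤ be a map and for primitive w = (w₁,w₂) ∈ ℤ² define ξ_w(z) = ((w₁z₁ + w₂z₂)/g(w₁,w₂)) (Jacobi symbol with odd modulus g(w₁,w₂) > 1). Fix w, v ∈ ℤ² and set q = g(w)·g(v), d = gcd(g(w), g(v)). Assume the linear forms w₁x + w₂y and v₁x + v₂y are not proportional modulo any prime divisor of d, and that gcd(w₁,w₂) = gcd(v₁,v₂) = 1. Then Σ_{z mod q} ξ_w(z)·ξ_v(z) = q·φ(d)·φ(q/d) if both q and q/d² (equivalently d and q/d) are perfect squares, and 0 otherwise. -/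
/-!
The two linear forms, reduced modulo `g(w)` and `g(v)`, give an additive homomorphism
`(ℤ/qℤ)² → ℤ/g(w) × ℤ/g(v)`; it is surjective because `w`, `v` are primitive and their
determinant is prime to `d`. Hence every fibre has `q` points, and the sum factors as
`q · (Σ_a (a/g(w))) · (Σ_b (b/g(v)))`. For odd `m` the Jacobi symbol `(·/m)` is a multiplicative
character modulo `m` which is trivial iff `m` is a square, so `Σ_a (a/m)` is `φ(m)` or `0`.
Comparing prime exponents, `q` and `d` are squares iff `g(w)` and `g(v)` are, and
`φ(d) φ(q/d) = φ(g(w)) φ(g(v))` since `q/d = lcm(g(w), g(v))`.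
-/

open Finset
open scoped Nat

theorem Nat.isSquare_iff_forall_even_factorization {n : ℕ} (hn : n ≠ 0) :
    IsSquare n ↔ ∀ p, Even (n.factorization p) := by
  constructor
  · rintro ⟨r, rfl⟩ p
    have hr : r ≠ 0 := by rintro rfl; simp at hn
    simp [Nat.factorization_mul hr hr]
  · intro h
    refine ⟨n.factorization.prod fun p k => p ^ (k / 2), ?_⟩
    rw [← Finsupp.prod_mul]
    conv_lhs => rw [← Nat.prod_factorization_pow_eq_self hn]
    refine Finsupp.prod_congr fun p _ => ?_
    obtain ⟨c, hc⟩ := h p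
    rw [← pow_add]
    congr 1
    omega

theorem Nat.isSquare_mul_and_isSquare_gcd_iff {m n : ℕ} (hm : m ≠ 0) (hn : n ≠ 0) :
    IsSquare (m * n) ∧ IsSquare (m.gcd n) ↔ IsSquare m ∧ IsSquare n := by
  simp only [isSquare_iff_forall_even_factorization, hm, hn, ne_eq, mul_eq_zero, gcd_eq_zero_iff,
    or_self, and_self, not_false_eq_true, factorization_mul hm hn, factorization_gcd hm hn,
    Finsupp.add_apply, Finsupp.inf_apply, ← forall_and]
  refine forall_congr' fun p => ?_
  rcases le_total (m.factorization p) (n.factorization p) with h | h <;>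
    simp [h, Nat.even_add] <;> tauto

theorem Nat.totient_mul_of_dvd {a b : ℕ} (h : a ∣ b) : φ (a * b) = a * φ b := by
  rcases eq_or_ne a 0 with rfl | ha
  · simp
  have := totient_gcd_mul_totient_mul a b
  rw [gcd_eq_left h] at this
  refine Nat.eq_of_mul_eq_mul_left (totient_pos.mpr (Nat.pos_of_ne_zero ha)) ?_
  rw [this]
  ring

theorem Nat.totient_gcd_mul_totient_lcm (m n : ℕ) : φ (m.gcd n) * φ (m.lcm n) = φ m * φ n := by
  rcases eq_or_ne (m.gcd n) 0 with hd | hd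
  · simp [Nat.gcd_eq_zero_iff.mp hd]
  apply Nat.eq_of_mul_eq_mul_right (Nat.pos_of_ne_zero hd)
  calc φ (m.gcd n) * φ (m.lcm n) * m.gcd n = φ (m.gcd n) * φ (m.gcd n * m.lcm n) := by
        rw [totient_mul_of_dvd ((gcd_dvd_left m n).trans (dvd_lcm_left m n))]; ring
    _ = φ m * φ n * m.gcd n := by rw [gcd_mul_lcm, totient_gcd_mul_totient_mul]

theorem Int.isCoprime_natCast_of_forall_prime_dvd {a : ℤ} {d : ℕ}
    (h : ∀ p : ℕ, p.Prime → p ∣ d → ¬(p : ℤ) ∣ a) : IsCoprime a d := by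
  rw [Int.isCoprime_iff_gcd_eq_one, Int.gcd_comm]
  exact Nat.coprime_of_dvd fun p hp hpd hpa => h p hp hpd (Int.natCast_dvd.mpr hpa)

theorem exists_jacobiSym_eq_neg_one {m : ℕ} (hm : Odd m) (hsq : ¬IsSquare m) :
    ∃ a : ℤ, jacobiSym a m = -1 := by
  have hm0 : m ≠ 0 := hm.pos.ne'
  obtain ⟨p, hk⟩ : ∃ p, Odd (m.factorization p) := by
    simpa [Nat.isSquare_iff_forall_even_factorization hm0] using hsq
  set k := m.factorization p
  have hp : p.Prime := Nat.prime_of_mem_primeFactors (Finsupp.mem_support_iff.mpr hk.pos.ne')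
  have hpm : p ∣ m := Nat.dvd_of_factorization_pos hk.pos.ne'
  have := Fact.mk hp
  obtain ⟨x, hx⟩ : ∃ x : ZMod p, ¬IsSquare x := by
    refine FiniteField.exists_nonsquare ?_
    rw [ZMod.ringChar_zmod_n]
    rintro rfl
    exact (Nat.not_even_iff_odd.mpr hm) (even_iff_two_dvd.mpr hpm)
  -- `a` is a non-residue modulo `p` and a residue modulo the prime-to-`p` part of `m`
  obtain ⟨a, ha₁, ha₂⟩ := Nat.chineseRemainder ((Nat.coprime_ordCompl hp hm0).pow_left k) x.val 1
  refine ⟨a, ?_⟩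
  have hap : legendreSym p a = -1 := by
    rw [legendreSym.eq_neg_one_iff', (ZMod.natCast_eq_natCast_iff _ _ _).mpr
      (ha₁.of_dvd (dvd_pow_self p hk.pos.ne')), ZMod.natCast_zmod_val]
    exact hx
  rw [← Nat.ordProj_mul_ordCompl_eq_self m p, jacobiSym.mul_right' _ (pow_ne_zero _ hp.ne_zero)
    (Nat.ordCompl_pos p hm0).ne', jacobiSym.pow_right, ← jacobiSym.legendreSym.to_jacobiSym, hap,
    jacobiSym.mod_left' (Int.natCast_modEq_iff.mpr ha₂), Nat.cast_one, jacobiSym.one_left,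
    mul_one, hk.neg_one_pow]

theorem jacobiSym_val_intCast (m : ℕ) [NeZero m] (x : ℤ) :
    jacobiSym ((x : ZMod m).val : ℤ) m = jacobiSym x m := by
  rw [ZMod.val_intCast, ← jacobiSym.mod_left]

def jacobiChar (m : ℕ) [NeZero m] : MulChar (ZMod m) ℤ where
  toFun a := jacobiSym (a.val : ℤ) m
  map_one' := by
    rw [← Int.cast_one, jacobiSym_val_intCast, jacobiSym.one_left]
  map_mul' a b := by
    have hab : a * b = ((a.val * b.val : ℤ) : ZMod m) := by simp
    rw [hab, jacobiSym_val_intCast, jacobiSym.mul_left]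
  map_nonunit' a ha := by
    rw [jacobiSym.eq_zero_iff_not_coprime, Int.gcd_natCast_natCast]
    rwa [← ZMod.natCast_zmod_val a, ZMod.isUnit_iff_coprime] at ha

theorem jacobiChar_intCast (m : ℕ) [NeZero m] (x : ℤ) : jacobiChar m x = jacobiSym x m :=
  jacobiSym_val_intCast m x

theorem jacobiChar_eq_one_of_isSquare {m : ℕ} [NeZero m] (hsq : IsSquare m) :
    jacobiChar m = 1 := by
  obtain ⟨r, rfl⟩ := hsq
  have hr : r ≠ 0 := left_ne_zero_of_mul (NeZero.ne (r * r))
  refine MulChar.ext fun u => ?_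
  have hu : Int.gcd ((u : ZMod (r * r)).val : ℤ) r = 1 := by
    rw [Int.gcd_natCast_natCast]
    exact (ZMod.val_coe_unit_coprime u).coprime_mul_right_right
  rw [MulChar.one_apply_coe, jacobiChar, MulChar.coe_mk, MonoidHom.coe_mk, OneHom.coe_mk,
    jacobiSym.mul_right' _ hr hr, ← sq, jacobiSym.sq_one hu]

theorem jacobiChar_ne_one_of_not_isSquare {m : ℕ} [NeZero m] (hm : Odd m) (hsq : ¬IsSquare m) :
    jacobiChar m ≠ 1 := by
  obtain ⟨a, ha⟩ := exists_jacobiSym_eq_neg_one hm hsq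
  intro h
  have h₁ : (1 : MulChar (ZMod m) ℤ) a = -1 := by rw [← h, jacobiChar_intCast, ha]
  by_cases hu : IsUnit (a : ZMod m)
  · simp [MulChar.one_apply hu] at h₁
  · simp [MulChar.map_nonunit _ hu] at h₁

theorem sum_jacobiChar {m : ℕ} [NeZero m] (hm : Odd m) :
    ∑ a, jacobiChar m a = if IsSquare m then (φ m : ℤ) else 0 := by
  split_ifs with hsq
  · rw [jacobiChar_eq_one_of_isSquare hsq, MulChar.sum_one_eq_card_units,
      ZMod.card_units_eq_totient]
  · exact MulChar.sum_eq_zero_of_ne_one (jacobiChar_ne_one_of_not_isSquare hm hsq)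

theorem ZMod.sum_range_eq_sum_univ {M : Type*} [AddCommMonoid M] (q : ℕ) [NeZero q]
    (f : ZMod q → M) : ∑ i ∈ range q, f i = ∑ a : ZMod q, f a :=
  sum_nbij' (↑) ZMod.val (fun _ _ => mem_univ _) (fun a _ => mem_range.mpr a.val_lt)
    (fun _ hi => ZMod.val_cast_of_lt (mem_range.mp hi)) (fun a _ => ZMod.natCast_zmod_val a)
    (fun _ _ => rfl)

theorem AddMonoidHom.card_nsmul_sum_comp_of_surjective {G H M : Type*} [AddGroup G] [AddGroup H]
    [Fintype G] [Fintype H] [AddCommMonoid M] (F : G →+ H) (hF : Function.Surjective F)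
    (f : H → M) : Fintype.card H • ∑ g, f (F g) = Fintype.card G • ∑ h, f h := by
  classical
  have hfiber : ∀ h, #{g | F g = h} = #{g | F g = 0} := by
    intro h
    obtain ⟨g₀, rfl⟩ := hF h
    exact (card_equiv (Equiv.addRight g₀) (by simp)).symm
  have hcard : Fintype.card G = Fintype.card H * #{g | F g = 0} := by
    rw [← card_univ, card_eq_sum_card_fiberwise (f := F) (t := univ) (fun _ _ => mem_univ _)]
    simp [hfiber]
  rw [← sum_fiberwise' univ F f]
  simp only [sum_const, hfiber, ← smul_sum, smul_smul, hcard]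

theorem exists_linear_forms_modEq {w₁ w₂ v₁ v₂ : ℤ} {m n : ℕ} (hw : IsCoprime w₁ w₂)
    (hv : IsCoprime v₁ v₂) (hδ : IsCoprime (w₁ * v₂ - w₂ * v₁) (m.gcd n)) (a b : ℤ) :
    ∃ z₁ z₂ : ℤ, w₁ * z₁ + w₂ * z₂ ≡ a [ZMOD m] ∧ v₁ * z₁ + v₂ * z₂ ≡ b [ZMOD n] := by
  obtain ⟨α, β, hαβ⟩ := hw
  obtain ⟨γ, ε, hγε⟩ := hv
  obtain ⟨x, y, hxy⟩ := hδ
  have hef : (m : ℤ) * Int.gcdA m n + n * Int.gcdB m n = m.gcd n := by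
    rw [← Int.gcd_natCast_natCast, Int.gcd_eq_gcd_ab]
  -- `z = a (α, β) + t (-w₂, w₁) + s m (γ, ε)` solves the first congruence for all `t, s`, and
  -- moves the second form by `t δ + s m` (`δ = w₁ v₂ - w₂ v₁`); these reach `r` modulo `n`
  -- since `δ x + gcd(m, n) y = 1`.
  set r := b - a * (v₁ * α + v₂ * β)
  set t := x * r
  set s := y * Int.gcdA m n * r
  refine ⟨a * α - t * w₂ + s * m * γ, a * β + t * w₁ + s * m * ε, ?_, ?_⟩
  · exact Int.modEq_iff_dvd.mpr ⟨-(s * (w₁ * γ + w₂ * ε)), by linear_combination (-a) * hαβ⟩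
  · exact Int.modEq_iff_dvd.mpr ⟨r * y * Int.gcdB m n, by
      linear_combination (-(s * m)) * hγε - (r * y) * hef - r * hxy⟩

def linearFormMod {q : ℕ} (m : ℕ) (hm : m ∣ q) (a b : ℤ) : ZMod q × ZMod q →+ ZMod m where
  toFun z := ZMod.castHom hm (ZMod m) (a * z.1 + b * z.2)
  map_zero' := by simp
  map_add' z z' := by
    rw [← map_add]
    congr 1
    simp only [Prod.fst_add, Prod.snd_add]
    ring

theorem linearFormMod_intCast {q m : ℕ} (hm : m ∣ q) (a b x y : ℤ) :
    linearFormMod m hm a b (x, y) = ((a * x + b * y : ℤ) : ZMod m) := by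
  change ZMod.castHom hm (ZMod m) (a * x + b * y) = _
  rw [← map_intCast (ZMod.castHom hm (ZMod m))]
  push_cast
  rfl

theorem linearFormMod_prod_surjective {q m n : ℕ} (hm : m ∣ q) (hn : n ∣ q) {w₁ w₂ v₁ v₂ : ℤ}
    (hw : IsCoprime w₁ w₂) (hv : IsCoprime v₁ v₂) (hδ : IsCoprime (w₁ * v₂ - w₂ * v₁) (m.gcd n)) :
    Function.Surjective ((linearFormMod m hm w₁ w₂).prod (linearFormMod n hn v₁ v₂)) := by
  rintro ⟨A, B⟩
  obtain ⟨z₁, z₂, h₁, h₂⟩ := exists_linear_forms_modEq hw hv hδ (A.cast : ℤ) (B.cast : ℤ)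
  refine ⟨((z₁ : ZMod q), (z₂ : ZMod q)), ?_⟩
  rw [AddMonoidHom.prod_apply, linearFormMod_intCast, linearFormMod_intCast,
    (ZMod.intCast_eq_intCast_iff _ _ _).mpr h₁, (ZMod.intCast_eq_intCast_iff _ _ _).mpr h₂,
    ZMod.intCast_zmod_cast, ZMod.intCast_zmod_cast]

theorem sum_jacobiSym_mul_jacobiSym {m n : ℕ} (hm : Odd m) (hn : Odd n) {w₁ w₂ v₁ v₂ : ℤ}
    (hw : IsCoprime w₁ w₂) (hv : IsCoprime v₁ v₂) (hδ : IsCoprime (w₁ * v₂ - w₂ * v₁) (m.gcd n)) :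
    ∑ z₁ ∈ range (m * n), ∑ z₂ ∈ range (m * n),
        jacobiSym (w₁ * z₁ + w₂ * z₂) m * jacobiSym (v₁ * z₁ + v₂ * z₂) n =
      (m * n : ℤ) * ((if IsSquare m then (φ m : ℤ) else 0) *
        (if IsSquare n then (φ n : ℤ) else 0)) := by
  have : NeZero m := ⟨hm.pos.ne'⟩
  have : NeZero n := ⟨hn.pos.ne'⟩
  set F := (linearFormMod m (dvd_mul_right m n) w₁ w₂).prod
    (linearFormMod n (dvd_mul_left n m) v₁ v₂)
  set f : ZMod m × ZMod n → ℤ := fun y => jacobiChar m y.1 * jacobiChar n y.2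
  calc _ = ∑ z, f (F z) := by
        rw [Fintype.sum_prod_type, ← ZMod.sum_range_eq_sum_univ]
        refine sum_congr rfl fun z₁ _ => ?_
        rw [← ZMod.sum_range_eq_sum_univ]
        refine sum_congr rfl fun z₂ _ => ?_
        rw [← Int.cast_natCast (R := ZMod (m * n)) z₁, ← Int.cast_natCast (R := ZMod (m * n)) z₂]
        simp only [f, F, AddMonoidHom.prod_apply, linearFormMod_intCast, jacobiChar_intCast]
    _ = (m * n : ℤ) * ∑ y, f y := by
        have hcount := F.card_nsmul_sum_comp_of_surjective
          (linearFormMod_prod_surjective _ _ hw hv hδ) f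
        simp only [ZMod.card, Fintype.card_prod, nsmul_eq_mul] at hcount
        refine mul_left_cancel₀ (by simp [hm.pos.ne', hn.pos.ne'] : ((m * n : ℕ) : ℤ) ≠ 0)
          (hcount.trans ?_)
        push_cast
        ring
    _ = _ := by
        rw [← sum_jacobiChar hm, ← sum_jacobiChar hn, Fintype.sum_mul_sum, Fintype.sum_prod_type]

/-- Analogue of Lemma 21.1 of Friedlander–Iwaniec: with
`ξ_w(z) = ((w₁z₁ + w₂z₂) / g(w))` the Jacobi-symbol twist, `q = g(w)·g(v)`
and `d = gcd(g(w), g(v))`, assuming `w, v` primitive, `g(w), g(v)` odd and `> 1`,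
and the linear forms `w₁x + w₂y`, `v₁x + v₂y` not proportional modulo any prime
divisor of `d`, one has
`Σ_{z mod q} ξ_w(z)·ξ_v(z) = q·φ(d)·φ(q/d)` if `q` and `d` are both squares,
and `0` otherwise. -/
theorem stmt_9 (g : ℤ × ℤ → ℤ) (w v : ℤ × ℤ)
    (hgw1 : 1 < g w) (hgw2 : Odd (g w)) (hgv1 : 1 < g v) (hgv2 : Odd (g v))
    (hwprim : Int.gcd w.1 w.2 = 1) (hvprim : Int.gcd v.1 v.2 = 1)
    (q d : ℕ) (hq : q = (g w).toNat * (g v).toNat)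
    (hd : d = Nat.gcd (g w).toNat (g v).toNat)
    (hprop : ∀ p : ℕ, p.Prime → p ∣ d → ¬ ((p : ℤ) ∣ (w.1 * v.2 - w.2 * v.1))) :
    (∑ z₁ ∈ Finset.range q, ∑ z₂ ∈ Finset.range q,
        jacobiSym (w.1 * (z₁ : ℤ) + w.2 * (z₂ : ℤ)) (g w).toNat *
          jacobiSym (v.1 * (z₁ : ℤ) + v.2 * (z₂ : ℤ)) (g v).toNat) =
      if IsSquare q ∧ IsSquare d then
        (q : ℤ) * (Nat.totient d : ℤ) * (Nat.totient (q / d) : ℤ)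
      else 0 := by
  have hm : Odd (g w).toNat := by rwa [← Int.odd_coe_nat, Int.toNat_of_nonneg (by omega)]
  have hn : Odd (g v).toNat := by rwa [← Int.odd_coe_nat, Int.toNat_of_nonneg (by omega)]
  subst hq hd
  set m := (g w).toNat
  set n := (g v).toNat
  have hsq_iff := Nat.isSquare_mul_and_isSquare_gcd_iff hm.pos.ne' hn.pos.ne'
  rw [sum_jacobiSym_mul_jacobiSym hm hn (Int.isCoprime_iff_gcd_eq_one.mpr hwprim)
    (Int.isCoprime_iff_gcd_eq_one.mpr hvprim) (Int.isCoprime_natCast_of_forall_prime_dvd hprop)]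
  by_cases hsq : IsSquare m ∧ IsSquare n
  · rw [if_pos hsq.1, if_pos hsq.2, if_pos (hsq_iff.mpr hsq), ← Nat.lcm]
    norm_cast
    rw [mul_assoc (m * n), Nat.totient_gcd_mul_totient_lcm]
  · rw [if_neg (mt hsq_iff.mp hsq)]
    rcases not_and_or.mp hsq with h | h <;> simp [h]
end
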